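/- arXiv:2305.05561 — 3 statements merged into one kernel-verified Lean document; each statement's English description precedes it below -/
import Mathlib

section
/- Let X and Y be real Banach spaces and let β > 2γ > 0 and c, R > 0 be constants. Then there exist constants T > 0 and c_v > 0, depending only on β, γ, c and R, with the following property: for every t ∈ (0, T), every bounded linear map D : X → Y admitting a bounded linear right inverse Q : Y → X (i.e. D ∘ Q = id_Y) with operator norm ‖Q‖ ≤ c t^{−γ}, every map N from the closed ball of radius R around 0 in X to Y satisfying N(0) = 0 and ‖N(x) − N(x′)‖ ≤ c (‖x‖ + ‖x′‖) ‖x − x′‖ for all x, x′ in that ball, and every e ∈ Y with ‖e‖ ≤ c t^{β}, there exists x ∈ X with ‖x‖ ≤ c_v t^{β−γ} and D x + N(x) = e. -/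
/-!
Since `D ∘ Q = id`, a fixed point of `x ↦ Q (e - N x)` solves `D x + N x = e`. On the ball of
radius `r = 2 c² t^(β-γ)` the quadratic estimate makes `N` Lipschitz with constant `2 c r`, so this
map has Lipschitz constant at most `2 ‖Q‖ c r ≤ 4 c⁴ t^(β-2γ)`, which is `≤ 1/2` for small `t`
because `β > 2γ`; and since `‖Q‖ ‖e‖ ≤ c² t^(β-γ) = r / 2` it maps the ball into itself. The
contraction mapping theorem then provides the fixed point.
-/

open Set Metric Filter Topology Function

theorem exists_isFixedPt_of_mapsTo_of_lipschitzOnWith {α : Type*} [MetricSpace α] {f : α → α}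
    {s : Set α} {K : NNReal} (hK : K < 1) (hsc : IsComplete s) (hs : s.Nonempty)
    (hsf : MapsTo f s s) (hf : LipschitzOnWith K f s) : ∃ y ∈ s, IsFixedPt f y := by
  obtain ⟨x, hx⟩ := hs
  obtain ⟨y, hys, hy, -⟩ := ContractingWith.exists_fixedPoint' hsc hsf
    ⟨hK, hf.mapsToRestrict hsf⟩ hx (edist_ne_top x (f x))
  exact ⟨y, hys, hy⟩

section Perturbation

variable {X Y : Type*} [NormedAddCommGroup X] [NormedAddCommGroup Y] {N : X → Y} {L r : ℝ}

theorem norm_sub_le_of_quadratic_on_closedBall (hL : 0 ≤ L)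
    (hN : ∀ x ∈ closedBall (0 : X) r, ∀ x' ∈ closedBall (0 : X) r,
      ‖N x - N x'‖ ≤ L * (‖x‖ + ‖x'‖) * ‖x - x'‖)
    {x x' : X} (hx : x ∈ closedBall 0 r) (hx' : x' ∈ closedBall 0 r) :
    ‖N x - N x'‖ ≤ 2 * L * r * ‖x - x'‖ := by
  calc ‖N x - N x'‖ ≤ L * (‖x‖ + ‖x'‖) * ‖x - x'‖ := hN x hx x' hx'
    _ ≤ L * (r + r) * ‖x - x'‖ := by
        gcongr
        exacts [mem_closedBall_zero_iff.1 hx, mem_closedBall_zero_iff.1 hx']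
    _ = 2 * L * r * ‖x - x'‖ := by ring

variable [NormedSpace ℝ X] [NormedSpace ℝ Y] (Q : Y →L[ℝ] X) (e : Y)

theorem mapsTo_closedBall_of_quadratic (hN0 : N 0 = 0) (hL : 0 ≤ L)
    (hN : ∀ x ∈ closedBall (0 : X) r, ∀ x' ∈ closedBall (0 : X) r,
      ‖N x - N x'‖ ≤ L * (‖x‖ + ‖x'‖) * ‖x - x'‖)
    (he : ‖Q‖ * ‖e‖ ≤ r / 2) (hr : 4 * ‖Q‖ * L * r ≤ 1) :
    MapsTo (fun x ↦ Q (e - N x)) (closedBall 0 r) (closedBall 0 r) := by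
  intro x hx
  have hr0 : 0 ≤ r := by linarith [mul_nonneg (norm_nonneg Q) (norm_nonneg e)]
  have hNx : ‖N x‖ ≤ 2 * L * r * r := by
    have := norm_sub_le_of_quadratic_on_closedBall hL hN hx (mem_closedBall_self hr0)
    rw [hN0, sub_zero, sub_zero] at this
    exact this.trans (by gcongr; exact mem_closedBall_zero_iff.1 hx)
  rw [mem_closedBall_zero_iff]
  calc ‖Q (e - N x)‖ ≤ ‖Q‖ * ‖e - N x‖ := Q.le_opNorm _
    _ ≤ ‖Q‖ * ‖e‖ + ‖Q‖ * (2 * L * r * r) := by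
        rw [← mul_add]; gcongr; exact (norm_sub_le _ _).trans (by gcongr)
    _ ≤ r := by nlinarith

theorem lipschitzOnWith_closedBall_of_quadratic (hL : 0 ≤ L)
    (hN : ∀ x ∈ closedBall (0 : X) r, ∀ x' ∈ closedBall (0 : X) r,
      ‖N x - N x'‖ ≤ L * (‖x‖ + ‖x'‖) * ‖x - x'‖)
    (hr : 4 * ‖Q‖ * L * r ≤ 1) :
    LipschitzOnWith (1 / 2) (fun x ↦ Q (e - N x)) (closedBall 0 r) := by
  refine LipschitzOnWith.of_dist_le_mul fun x hx x' hx' ↦ ?_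
  rw [dist_eq_norm, dist_eq_norm, ← map_sub, sub_sub_sub_cancel_left]
  calc ‖Q (N x' - N x)‖ ≤ ‖Q‖ * ‖N x' - N x‖ := Q.le_opNorm _
    _ ≤ ‖Q‖ * (2 * L * r * ‖x' - x‖) := by
        gcongr; exact norm_sub_le_of_quadratic_on_closedBall hL hN hx' hx
    _ ≤ (1 / 2 : NNReal) * ‖x - x'‖ := by
        rw [norm_sub_rev x']; push_cast
        nlinarith [norm_nonneg (x - x')]

theorem exists_add_eq_of_rightInverse [CompleteSpace X] (D : X →L[ℝ] Y)
    (hDQ : D.comp Q = ContinuousLinearMap.id ℝ Y) (hN0 : N 0 = 0) (hL : 0 ≤ L)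
    (hN : ∀ x ∈ closedBall (0 : X) r, ∀ x' ∈ closedBall (0 : X) r,
      ‖N x - N x'‖ ≤ L * (‖x‖ + ‖x'‖) * ‖x - x'‖)
    (he : ‖Q‖ * ‖e‖ ≤ r / 2) (hr : 4 * ‖Q‖ * L * r ≤ 1) :
    ∃ x : X, ‖x‖ ≤ r ∧ D x + N x = e := by
  have hr0 : 0 ≤ r := by linarith [mul_nonneg (norm_nonneg Q) (norm_nonneg e)]
  obtain ⟨x, hx, hfix⟩ := exists_isFixedPt_of_mapsTo_of_lipschitzOnWith (by norm_num)
    isClosed_closedBall.isComplete ⟨0, mem_closedBall_self hr0⟩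
    (mapsTo_closedBall_of_quadratic Q e hN0 hL hN he hr)
    (lipschitzOnWith_closedBall_of_quadratic Q e hL hN hr)
  refine ⟨x, mem_closedBall_zero_iff.1 hx, ?_⟩
  have hDx : e - N x = D x := by
    simpa [hfix.eq] using congr($hDQ (e - N x)).symm
  rw [← hDx, sub_add_cancel]

end Perturbation

theorem eventually_mul_rpow_le {a : ℝ} (ha : 0 < a) (C : ℝ) {ε : ℝ} (hε : 0 < ε) :
    ∀ᶠ t in 𝓝 0, C * t ^ a ≤ ε := by
  have : Tendsto (fun t : ℝ ↦ C * t ^ a) (𝓝 0) (𝓝 (C * 0 ^ a)) :=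
    tendsto_const_nhds.mul (Real.continuousAt_rpow_const 0 a (.inr ha.le))
  rw [Real.zero_rpow ha.ne', mul_zero] at this
  exact this.eventually_le_const hε

/-- Banach-space formulation of the perturbation theorem for coassociative
submanifolds (Theorem 3.3 of the paper). -/
theorem stmt0 (β γ c R : ℝ) (hγ : 0 < γ) (hβ : 2 * γ < β) (hc : 0 < c) (hR : 0 < R) :
    ∃ T > (0 : ℝ), ∃ cv > (0 : ℝ),
      ∀ (X : Type) (Y : Type)
        [NormedAddCommGroup X] [NormedSpace ℝ X] [CompleteSpace X]
        [NormedAddCommGroup Y] [NormedSpace ℝ Y] [CompleteSpace Y],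
      ∀ t : ℝ, t ∈ Set.Ioo 0 T →
      ∀ (D : X →L[ℝ] Y) (Q : Y →L[ℝ] X),
        D.comp Q = ContinuousLinearMap.id ℝ Y →
        ‖Q‖ ≤ c * t ^ (-γ) →
      ∀ N : X → Y, N 0 = 0 →
        (∀ x x' : X, x ∈ Metric.closedBall (0 : X) R → x' ∈ Metric.closedBall (0 : X) R →
          ‖N x - N x'‖ ≤ c * (‖x‖ + ‖x'‖) * ‖x - x'‖) →
      ∀ e : Y, ‖e‖ ≤ c * t ^ β →
        ∃ x : X, ‖x‖ ≤ cv * t ^ (β - γ) ∧ D x + N x = e := by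
  have hβγ : 0 < β - γ := by linarith
  have hβ2γ : 0 < β - 2 * γ := by linarith
  have hsmall := (eventually_mul_rpow_le hβγ (2 * c ^ 2) hR).and
    (eventually_mul_rpow_le hβ2γ (8 * c ^ 4) one_pos)
  obtain ⟨T, hT, hsub⟩ := mem_nhdsGT_iff_exists_Ioo_subset.1 (nhdsWithin_le_nhds hsmall)
  refine ⟨T, hT, 2 * c ^ 2, by positivity, ?_⟩
  intro X Y _ _ _ _ _ _ t ht D Q hDQ hQ N hN0 hN e he
  obtain ⟨hrR, hcontr⟩ := hsub ht
  have ht0 : 0 < t := ht.1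
  have hQe : ‖Q‖ * ‖e‖ ≤ c ^ 2 * t ^ (β - γ) := calc
    ‖Q‖ * ‖e‖ ≤ c * t ^ (-γ) * (c * t ^ β) := by gcongr
    _ = c ^ 2 * t ^ (β - γ) := by
      rw [show β - γ = -γ + β by ring, Real.rpow_add ht0]; ring
  have hQr : 4 * ‖Q‖ * c * (2 * c ^ 2 * t ^ (β - γ)) ≤ 1 := calc
    _ ≤ 4 * (c * t ^ (-γ)) * c * (2 * c ^ 2 * t ^ (β - γ)) := by gcongr
    _ = 8 * c ^ 4 * t ^ (β - 2 * γ) := by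
      rw [show β - 2 * γ = -γ + (β - γ) by ring, Real.rpow_add ht0]; ring
    _ ≤ 1 := hcontr
  exact exists_add_eq_of_rightInverse Q e D hDQ hN0 hc.le
    (fun x hx x' hx' ↦ hN x x' (closedBall_subset_closedBall hrR hx)
      (closedBall_subset_closedBall hrR hx')) (by linarith) hQr
end

section
/- For every integer N ≥ 1 let ρ_N : ℍ → ℍ denote right multiplication by the unit quaternion z_N := cos(2π/N) + sin(2π/N)·i; this is an ℝ-linear isometry of ℍ of determinant 1. Let SO(ℍ) denote the group of ℝ-linear isometries of ℍ with determinant 1 and let C_N ≤ SO(ℍ) be the cyclic subgroup generated by ρ_N. Then for all integers N, M ≥ 3, the normalizer of C_N in SO(ℍ) equals the normalizer of C_M in SO(ℍ). -/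
noncomputable def zN (N : ℕ) : Quaternion ℝ :=
  ⟨Real.cos (2 * Real.pi / N), Real.sin (2 * Real.pi / N), 0, 0⟩

lemma zN_ne_zero (N : ℕ) : zN N ≠ 0 := by
  intro h0
  have h : Quaternion.normSq (zN N) = 1 := by
    rw [Quaternion.normSq_def']
    simp only [zN]
    have := Real.sin_sq_add_cos_sq (2 * Real.pi / N)
    ring_nf
    ring_nf at this
    linarith
  rw [h0] at h
  simp at h

noncomputable def rhoN (N : ℕ) : Quaternion ℝ ≃ₗ[ℝ] Quaternion ℝ :=
  LinearEquiv.ofLinear (LinearMap.mulRight ℝ (zN N)) (LinearMap.mulRight ℝ (zN N)⁻¹)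
    (LinearMap.ext fun x => by
      show x * (zN N)⁻¹ * zN N = x
      rw [mul_assoc, inv_mul_cancel₀ (zN_ne_zero N), mul_one])
    (LinearMap.ext fun x => by
      show x * zN N * (zN N)⁻¹ = x
      rw [mul_assoc, mul_inv_cancel₀ (zN_ne_zero N), mul_one])

def inSO (f : Quaternion ℝ ≃ₗ[ℝ] Quaternion ℝ) : Prop :=
  (∀ x : Quaternion ℝ, ‖f x‖ = ‖x‖) ∧
    LinearMap.det (f : Quaternion ℝ →ₗ[ℝ] Quaternion ℝ) = 1

noncomputable def cyclicCN (N : ℕ) : Set (Quaternion ℝ ≃ₗ[ℝ] Quaternion ℝ) :=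
  {g | ∃ k : ℤ, g = rhoN N ^ k}

noncomputable def normalizerSO (N : ℕ) : Set (Quaternion ℝ ≃ₗ[ℝ] Quaternion ℝ) :=
  {R | inSO R ∧ ∀ g : Quaternion ℝ ≃ₗ[ℝ] Quaternion ℝ,
    R * g * R⁻¹ ∈ cyclicCN N ↔ g ∈ cyclicCN N}

/-! ### auxiliary definitions -/

noncomputable def zq (t : ℝ) : Quaternion ℝ := ⟨Real.cos t, Real.sin t, 0, 0⟩

lemma zN_eq (N : ℕ) : zN N = zq (2 * Real.pi / N) := rfl

lemma zq_mul (a b : ℝ) : zq a * zq b = zq (a + b) := by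
  ext <;>
    simp [Quaternion.re_mul, Quaternion.imI_mul, Quaternion.imJ_mul, Quaternion.imK_mul] <;> simp [zq,
      Real.cos_add, Real.sin_add] <;> ring

lemma zq_zero : zq 0 = 1 := by
  ext <;> simp [zq, Quaternion.re_one, Quaternion.imI_one, Quaternion.imJ_one, Quaternion.imK_one]

lemma zq_inv (a : ℝ) : (zq a)⁻¹ = zq (-a) := by
  symm
  apply eq_inv_of_mul_eq_one_left
  rw [zq_mul, neg_add_cancel, zq_zero]

def qi : Quaternion ℝ := ⟨0, 1, 0, 0⟩

lemma qi_mul_qi : qi * qi = -1 := by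
  ext <;> simp [Quaternion.re_mul, Quaternion.imI_mul, Quaternion.imJ_mul, Quaternion.imK_mul] <;> simp [qi, Quaternion.re_one, Quaternion.imI_one, Quaternion.imJ_one, Quaternion.imK_one]

noncomputable def rI : Quaternion ℝ →ₗ[ℝ] Quaternion ℝ := LinearMap.mulRight ℝ qi

lemma zq_eq (t : ℝ) : zq t = Real.cos t • (1 : Quaternion ℝ) + Real.sin t • qi := by
  ext <;> simp [QuaternionAlgebra.re_smul, QuaternionAlgebra.imI_smul, QuaternionAlgebra.imJ_smul, QuaternionAlgebra.imK_smul] <;> simp [zq, qi, Quaternion.re_one, Quaternion.imI_one, Quaternion.imJ_one, Quaternion.imK_one]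

lemma mulRight_zq (t : ℝ) :
    LinearMap.mulRight ℝ (zq t) = Real.cos t • LinearMap.id + Real.sin t • rI := by
  apply LinearMap.ext
  intro x
  simp [rI, zq_eq, mul_add, Algebra.mul_smul_comm]

lemma indep (x y : ℝ) (h : x • (LinearMap.id : Quaternion ℝ →ₗ[ℝ] Quaternion ℝ) + y • rI = 0) :
    x = 0 ∧ y = 0 := by
  have h1 := LinearMap.congr_fun h 1
  simp [rI] at h1
  have hre := congrArg QuaternionAlgebra.re h1
  have him := congrArg QuaternionAlgebra.imI h1
  simp [QuaternionAlgebra.re_smul, QuaternionAlgebra.imI_smul, QuaternionAlgebra.imJ_smul, QuaternionAlgebra.imK_smul] at hre him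
  simp [qi, Quaternion.re_one, Quaternion.imI_one, Quaternion.imJ_one, Quaternion.imK_one] at hre him
  exact ⟨hre, him⟩

lemma indep2 {x y x' y' : ℝ}
    (h : x • (LinearMap.id : Quaternion ℝ →ₗ[ℝ] Quaternion ℝ) + y • rI
       = x' • LinearMap.id + y' • rI) : x = x' ∧ y = y' := by
  have := indep (x - x') (y - y') (by
    rw [← sub_eq_zero] at h
    rw [← h]; module)
  constructor
  · linarith [this.1]
  · linarith [this.2]

lemma coe_mul (f g : Quaternion ℝ ≃ₗ[ℝ] Quaternion ℝ) :
    ((f * g).toLinearMap : Quaternion ℝ →ₗ[ℝ] Quaternion ℝ) = f.toLinearMap ∘ₗ g.toLinearMap :=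
  rfl

lemma coe_inv (f : Quaternion ℝ ≃ₗ[ℝ] Quaternion ℝ) :
    ((f⁻¹).toLinearMap : Quaternion ℝ →ₗ[ℝ] Quaternion ℝ) = f.symm.toLinearMap := rfl

lemma rhoN_zpow_coe (N : ℕ) (k : ℤ) :
    ((rhoN N ^ k).toLinearMap : Quaternion ℝ →ₗ[ℝ] Quaternion ℝ)
      = LinearMap.mulRight ℝ (zq (k * (2 * Real.pi / N))) := by
  induction k using Int.induction_on with
  | zero => simp [zq_zero]
  | succ n ih =>
      rw [zpow_add_one, coe_mul, ih,
        show (rhoN N).toLinearMap = LinearMap.mulRight ℝ (zq (2 * Real.pi / N)) from rfl,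
        ← LinearMap.mulRight_mul, zq_mul]
      norm_num
      ring_nf
  | pred n ih =>
      rw [zpow_sub_one, coe_mul, ih,
        show (rhoN N)⁻¹.toLinearMap = LinearMap.mulRight ℝ (zN N)⁻¹ from rfl,
        zN_eq, zq_inv, ← LinearMap.mulRight_mul, zq_mul]
      norm_num
      ring_nf

lemma rhoN_zpow_coe' (N : ℕ) (k : ℤ) :
    ((rhoN N ^ k).toLinearMap : Quaternion ℝ →ₗ[ℝ] Quaternion ℝ)
      = Real.cos (k * (2 * Real.pi / N)) • LinearMap.id
        + Real.sin (k * (2 * Real.pi / N)) • rI := by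
  rw [rhoN_zpow_coe, mulRight_zq]

lemma sin_th_ne (N : ℕ) (hN : 3 ≤ N) : Real.sin (2 * Real.pi / N) ≠ 0 := by
  have hNpos : (0:ℝ) < N := by positivity
  have h1 : 0 < 2 * Real.pi / N := by positivity
  have h2 : 2 * Real.pi / N < Real.pi := by
    rw [div_lt_iff₀ hNpos]
    have : (3:ℝ) ≤ N := by exact_mod_cast hN
    nlinarith [Real.pi_pos]
  exact ne_of_gt (Real.sin_pos_of_pos_of_lt_pi h1 h2)

noncomputable def conjI (R : Quaternion ℝ ≃ₗ[ℝ] Quaternion ℝ) : Quaternion ℝ →ₗ[ℝ] Quaternion ℝ :=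
  R.toLinearMap ∘ₗ rI ∘ₗ R.symm.toLinearMap

lemma self_comp_symm (R : Quaternion ℝ ≃ₗ[ℝ] Quaternion ℝ) :
    R.toLinearMap ∘ₗ R.symm.toLinearMap = LinearMap.id :=
  LinearMap.ext fun x => R.apply_symm_apply x

lemma conj_expand (R : Quaternion ℝ ≃ₗ[ℝ] Quaternion ℝ) (c s : ℝ) :
    (R.toLinearMap ∘ₗ (c • LinearMap.id + s • rI)) ∘ₗ R.symm.toLinearMap
      = c • LinearMap.id + s • conjI R := by
  apply LinearMap.ext
  intro x
  simp [conjI, rI]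

lemma conjI_sq (R : Quaternion ℝ ≃ₗ[ℝ] Quaternion ℝ) : conjI R ∘ₗ conjI R = -LinearMap.id := by
  apply LinearMap.ext
  intro x
  simp [conjI, rI, mul_assoc, qi_mul_qi]

lemma smul_expand (u a b : ℝ) :
    u • (a • (LinearMap.id : Quaternion ℝ →ₗ[ℝ] Quaternion ℝ) + b • rI)
      = (u * a) • LinearMap.id + (u * b) • rI := by
  rw [smul_add, smul_smul, smul_smul]

lemma comp_expand (a b a' b' : ℝ) :
    (a • (LinearMap.id : Quaternion ℝ →ₗ[ℝ] Quaternion ℝ) + b • rI)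
      ∘ₗ (a' • LinearMap.id + b' • rI)
      = (a * a' - b * b') • LinearMap.id + (a * b' + b * a') • rI := by
  have h : rI ∘ₗ rI = -LinearMap.id := by
    apply LinearMap.ext; intro x; simp [rI, mul_assoc, qi_mul_qi]
  apply LinearMap.ext
  intro x
  simp only [LinearMap.comp_apply, LinearMap.add_apply, LinearMap.smul_apply,
    LinearMap.id_apply, rI, LinearMap.mulRight_apply, add_mul, smul_mul_assoc,
    mul_assoc, qi_mul_qi, mul_neg_one]
  module

lemma rhoN_coe (N : ℕ) : ((rhoN N).toLinearMap : Quaternion ℝ →ₗ[ℝ] Quaternion ℝ)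
    = Real.cos (2 * Real.pi / N) • LinearMap.id + Real.sin (2 * Real.pi / N) • rI := by
  rw [show (rhoN N).toLinearMap = LinearMap.mulRight ℝ (zq (2 * Real.pi / N)) from rfl,
    mulRight_zq]

set_option maxHeartbeats 1000000 in
/-- The key characterization: the normalizer condition is equivalent to an `N`-free condition. -/
lemma key (N : ℕ) (hN : 3 ≤ N) (R : Quaternion ℝ ≃ₗ[ℝ] Quaternion ℝ) :
    (∀ g : Quaternion ℝ ≃ₗ[ℝ] Quaternion ℝ,
        R * g * R⁻¹ ∈ cyclicCN N ↔ g ∈ cyclicCN N) ↔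
    (conjI R = rI ∨ conjI R = -rI) := by
  set t : ℝ := 2 * Real.pi / N with ht
  have hs : Real.sin t ≠ 0 := sin_th_ne N hN
  constructor
  · intro h
    have h1 : R * rhoN N * R⁻¹ ∈ cyclicCN N := (h (rhoN N)).mpr ⟨1, (zpow_one _).symm⟩
    obtain ⟨k, hk⟩ := h1
    -- pass to linear maps
    have hmap := congrArg LinearEquiv.toLinearMap hk
    rw [coe_mul, coe_mul, coe_inv, rhoN_zpow_coe'] at hmap
    have hrho : (rhoN N).toLinearMap
        = Real.cos t • LinearMap.id + Real.sin t • rI := rhoN_coe N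
    rw [hrho, conj_expand] at hmap
    rw [← ht] at hmap
    -- hmap : cos t • id + sin t • conjI R = cos (k t) • id + sin (k t) • rI
    set c' : ℝ := Real.cos (k * t)
    set s' : ℝ := Real.sin (k * t)
    have hA : conjI R = ((c' - Real.cos t) / Real.sin t) • LinearMap.id
        + (s' / Real.sin t) • rI := by
      have h2 : Real.sin t • conjI R = (c' - Real.cos t) • LinearMap.id + s' • rI := by
        have h3 : Real.sin t • conjI R
            = (c' • LinearMap.id + s' • rI) - Real.cos t • LinearMap.id := by
          rw [← hmap]; abel
        rw [h3]; module
      have h3 := congrArg (fun f => (Real.sin t)⁻¹ • f) h2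
      rw [smul_smul, inv_mul_cancel₀ hs, one_smul] at h3
      rw [h3, smul_expand]
      congr 1 <;> rw [div_eq_inv_mul]
    set a : ℝ := (c' - Real.cos t) / Real.sin t
    set b : ℝ := s' / Real.sin t
    have hsq : conjI R ∘ₗ conjI R = -LinearMap.id := conjI_sq R
    rw [hA, comp_expand] at hsq
    have hsq' : (a * a - b * b) • (LinearMap.id : Quaternion ℝ →ₗ[ℝ] Quaternion ℝ)
        + (a * b + b * a) • rI = (-1 : ℝ) • LinearMap.id + (0 : ℝ) • rI := by
      rw [hsq]; module
    obtain ⟨e1, e2⟩ := indep2 hsq'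
    have hab : a = 0 := by
      rcases mul_eq_zero.mp (by linarith : a * b = 0) with h0 | h0
      · exact h0
      · exfalso; rw [h0] at e1; nlinarith
    have hb : b = 1 ∨ b = -1 := by
      have : b * b = 1 := by rw [hab] at e1; linarith
      rcases mul_eq_zero.mp (show (b - 1) * (b + 1) = 0 by nlinarith) with h0 | h0
      · left; linarith
      · right; linarith
    rw [hA, hab]
    rcases hb with h0 | h0 <;> rw [h0]
    · left; module
    · right; module
  · intro hA g
    -- first : R * rhoN N * R⁻¹ = rhoN N ^ ε for ε = ±1
    have hconj : ∃ ε : ℤ, ε * ε = 1 ∧ R * rhoN N * R⁻¹ = rhoN N ^ ε := by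
      have hrho : (rhoN N).toLinearMap
          = Real.cos t • LinearMap.id + Real.sin t • rI := rhoN_coe N
      rcases hA with h0 | h0
      · refine ⟨1, by norm_num, LinearEquiv.toLinearMap_injective ?_⟩
        rw [coe_mul, coe_mul, coe_inv, hrho, conj_expand, h0, rhoN_zpow_coe', ← ht,
          show ((1:ℤ):ℝ) * t = t by push_cast; ring]
      · refine ⟨-1, by norm_num, LinearEquiv.toLinearMap_injective ?_⟩
        rw [coe_mul, coe_mul, coe_inv, hrho, conj_expand, h0, rhoN_zpow_coe', ← ht,
          show ((-1:ℤ):ℝ) * t = -t by push_cast; ring, Real.cos_neg, Real.sin_neg,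
          smul_neg, ← neg_smul]
    obtain ⟨ε, hε, hc⟩ := hconj
    have hcc : ∀ k : ℤ, R * rhoN N ^ k * R⁻¹ = rhoN N ^ (ε * k) := by
      intro k
      have h2 := map_zpow (MulAut.conj R) (rhoN N) k
      simp only [MulAut.conj_apply] at h2
      rw [hc, ← zpow_mul] at h2
      exact h2
    have hcc' : ∀ k : ℤ, R⁻¹ * rhoN N ^ k * R = rhoN N ^ (ε * k) := by
      intro k
      have h2 : R * rhoN N ^ (ε * k) * R⁻¹ = rhoN N ^ k := by
        rw [hcc (ε * k), ← mul_assoc ε ε k, hε, one_mul]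
      calc R⁻¹ * rhoN N ^ k * R = R⁻¹ * (R * rhoN N ^ (ε * k) * R⁻¹) * R := by rw [h2]
        _ = rhoN N ^ (ε * k) := by group
    constructor
    · rintro ⟨k, hk⟩
      refine ⟨ε * k, ?_⟩
      have := hcc' k
      calc g = R⁻¹ * (R * g * R⁻¹) * R := by group
        _ = R⁻¹ * rhoN N ^ k * R := by rw [hk]
        _ = rhoN N ^ (ε * k) := hcc' k
    · rintro ⟨k, hk⟩
      exact ⟨ε * k, by rw [hk, hcc k]⟩

theorem stmt8 (N M : ℕ) (hN : 3 ≤ N) (hM : 3 ≤ M) :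
    normalizerSO N = normalizerSO M := by
  ext R
  simp only [normalizerSO, Set.mem_setOf_eq]
  constructor
  · rintro ⟨h1, h2⟩
    exact ⟨h1, (key M hM R).mpr ((key N hN R).mp h2)⟩
  · rintro ⟨h1, h2⟩
    exact ⟨h1, (key N hN R).mpr ((key M hM R).mp h2)⟩
end

section
/- Let G be a group acting on ℝ³ by affine isometries, let X be a set with a G-action ρ, and let Σ ⊆ X be a subset. Let ξ₂, ξ₃ ∈ ℝ³ be linearly independent vectors that lie in G (i.e. the translations by ξ₂ and ξ₃ belong to G) and satisfy ρ(ξ₂)(Σ) = Σ = ρ(ξ₃)(Σ). Let q ∈ ℝ³, let P := q + ℝξ₂ + ℝξ₃ be the affine plane through q spanned by ξ₂, ξ₃, and let ⟨ξ₂, ξ₃⟩_ℤ act on (ℝξ₂ + ℝξ₃) × Σ by ξ·(y, s) = (y + ξ, ρ(ξ)(s)). Consider the well-defined map ι_q from the quotient ((ℝξ₂ + ℝξ₃) × Σ)/⟨ξ₂, ξ₃⟩_ℤ to the quotient (ℝ³ × X)/G (for the diagonal G-action g·(p, x) = (g·p, ρ(g)(x))) given by ι_q([y, s]) = [q + y,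 s]. If every g ∈ G with ρ(g)(Σ) ∩ Σ ≠ ∅ satisfies either g ∈ ⟨ξ₂, ξ₃⟩_ℤ or g·P ∩ P = ∅, then ι_q is injective. -/
noncomputable abbrev E3 := EuclideanSpace ℝ (Fin 3)

/-- Translation by a vector, as an isometry of ℝ³. -/
noncomputable def transl (v : E3) : E3 ≃ᵢ E3 :=
  ⟨Equiv.addLeft v, Isometry.of_dist_eq fun x y => by simp [dist_add_left]⟩

theorem transl_apply (v p : E3) : transl v p = v + p := rfl

theorem eq_add_of_transl_add_eq {v q y y' : E3} (h : transl v (q + y) = q + y') :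
    y' = y + v := by
  rw [transl_apply] at h
  exact (add_left_cancel (h ▸ by abel : q + (y + v) = q + y')).symm

theorem stmt10_general (G : Subgroup (E3 ≃ᵢ E3)) (X : Type*) (ρ : G →* Equiv.Perm X)
    (Sig : Set X) (ξ₂ ξ₃ : E3)
    (q : E3)
    -- P is the affine plane through q spanned by ξ₂ and ξ₃
    (P : Set E3) (hP : P = (fun y => q + y) '' (Submodule.span ℝ {ξ₂, ξ₃} : Set E3))
    -- main hypothesis: every g ∈ G with ρ(g)(Σ) ∩ Σ ≠ ∅ lies in ⟨ξ₂, ξ₃⟩_ℤ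
    -- or moves P off itself
    (hmain : ∀ g : G, (⇑(ρ g) '' Sig ∩ Sig).Nonempty →
      (∃ m n : ℤ, (g : E3 ≃ᵢ E3) = transl (m • ξ₂ + n • ξ₃)) ∨
      (∀ p ∈ P, (g : E3 ≃ᵢ E3) p ∉ P)) :
    -- conclusion: ι_q : ((ℝξ₂+ℝξ₃) × Σ)/⟨ξ₂,ξ₃⟩_ℤ → (ℝ³ × X)/G is injective
    ∀ y ∈ (Submodule.span ℝ {ξ₂, ξ₃} : Set E3), ∀ y' ∈ (Submodule.span ℝ {ξ₂, ξ₃} : Set E3),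
    ∀ s ∈ Sig, ∀ s' ∈ Sig, ∀ g : G,
      (g : E3 ≃ᵢ E3) (q + y) = q + y' → ρ g s = s' →
      ∃ h : G, (∃ m n : ℤ, (h : E3 ≃ᵢ E3) = transl (m • ξ₂ + n • ξ₃) ∧
          y' = y + (m • ξ₂ + n • ξ₃)) ∧ ρ h s = s' := by
  intro y hy y' hy' s hs s' hs' g hgy hgs
  have hqy : q + y ∈ P := hP ▸ ⟨y, hy, rfl⟩
  have hqy' : q + y' ∈ P := hP ▸ ⟨y', hy', rfl⟩
  obtain ⟨m, n, hg⟩ | hmove := hmain g ⟨s', ⟨s, hs, hgs⟩, hs'⟩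
  · exact ⟨g, ⟨m, n, hg, eq_add_of_transl_add_eq (hg ▸ hgy)⟩, hgs⟩
  · exact absurd (hgy ▸ hqy') (hmove _ hqy)

/-- Embeddedness criterion of Example 3.2 of the paper, formulated
set-theoretically: injectivity of ι_q. -/
theorem stmt10 (G : Subgroup (E3 ≃ᵢ E3)) (X : Type*) (ρ : G →* Equiv.Perm X)
    (Sig : Set X) (ξ₂ ξ₃ : E3)
    (hindep : LinearIndependent ℝ ![ξ₂, ξ₃])
    (hξ₂ : transl ξ₂ ∈ G) (hξ₃ : transl ξ₃ ∈ G)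
    (hSig₂ : ⇑(ρ ⟨transl ξ₂, hξ₂⟩) '' Sig = Sig)
    (hSig₃ : ⇑(ρ ⟨transl ξ₃, hξ₃⟩) '' Sig = Sig)
    (q : E3)
    -- P is the affine plane through q spanned by ξ₂ and ξ₃
    (P : Set E3) (hP : P = (fun y => q + y) '' (Submodule.span ℝ {ξ₂, ξ₃} : Set E3))
    -- main hypothesis: every g ∈ G with ρ(g)(Σ) ∩ Σ ≠ ∅ lies in ⟨ξ₂, ξ₃⟩_ℤ
    -- or moves P off itself
    (hmain : ∀ g : G, (⇑(ρ g) '' Sig ∩ Sig).Nonempty →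
      (∃ m n : ℤ, (g : E3 ≃ᵢ E3) = transl (m • ξ₂ + n • ξ₃)) ∨
      (∀ p ∈ P, (g : E3 ≃ᵢ E3) p ∉ P)) :
    -- conclusion: ι_q : ((ℝξ₂+ℝξ₃) × Σ)/⟨ξ₂,ξ₃⟩_ℤ → (ℝ³ × X)/G is injective
    ∀ y ∈ (Submodule.span ℝ {ξ₂, ξ₃} : Set E3), ∀ y' ∈ (Submodule.span ℝ {ξ₂, ξ₃} : Set E3),
    ∀ s ∈ Sig, ∀ s' ∈ Sig, ∀ g : G,
      (g : E3 ≃ᵢ E3) (q + y) = q + y' → ρ g s = s' →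
      ∃ h : G, (∃ m n : ℤ, (h : E3 ≃ᵢ E3) = transl (m • ξ₂ + n • ξ₃) ∧
          y' = y + (m • ξ₂ + n • ξ₃)) ∧ ρ h s = s' :=
  stmt10_general G X ρ Sig ξ₂ ξ₃ q P hP hmain
end
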